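/- Let M = (Q, A, E, q₀, F) be an NFA with total transition relation and |Q| > 1, let [·] : Q → D^m be a factor-decodable code of length m ≥ 2, and let I_{2m−1} and F_{2m} be the sets of the path-encoding construction. Then for every word z ∈ (A×D)^+ with |z| ≥ 2m, if every factor of z of length 2m belongs to F_{2m} and the prefix of z of length 2m−1 belongs to I_{2m−1}, then there exists a path η of M with origin o(η) = q₀ such that z = [η]. -/

import Mathlib

/-- A (nonempty) path of the NFA with transition relation `E`: a nonempty list of
transitions, all in `E`, which are pairwise consecutive. -/
def IsPath {Q A : Type} (E : Set (Q × A × Q)) (η : List (Q × A × Q)) : Prop :=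
  η ≠ [] ∧ (∀ e ∈ η, e ∈ E) ∧ List.Chain' (fun e f => e.2.2 = f.1) η

/-- The origin of a path (as an `Option`, `none` for the empty path). -/
def origState {Q A : Type} (η : List (Q × A × Q)) : Option Q := η.head?.map (fun e => e.1)

/-- The end of a path (as an `Option`, `none` for the empty path). -/
def endState {Q A : Type} (η : List (Q × A × Q)) : Option Q := η.getLast?.map (fun e => e.2.2)

/-- The label of a path. -/
def pathLabel {Q A : Type} (η : List (Q × A × Q)) : List A := η.map (fun e => e.2.1)

/-- The language of the NFA `(Q, A, E, q₀, F)`: labels of paths from `q₀` to a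
final state. -/
def nfaLang {Q A : Type} (E : Set (Q × A × Q)) (q0 : Q) (F : Set Q) : Set (List A) :=
  {w | ∃ η, IsPath E η ∧ origState η = some q0 ∧ (∃ q ∈ F, endState η = some q) ∧
    w = pathLabel η}

/-- The transition relation `E` is total. -/
def TotalRel {Q A : Type} (E : Set (Q × A × Q)) : Prop := ∀ q a, ∃ p, (q, a, p) ∈ E

/-- A code of `Q` into `D` of length `m`: an injective map sending each state to
a word of length `m`. -/
def IsCode {Q D : Type} (m : ℕ) (c : Q → List D) : Prop :=
  Function.Injective c ∧ ∀ q, (c q).length = m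

/-- A word `x ∈ D^{2m-1}` is factor-decodable: there is exactly one position `j`,
`1 ≤ j ≤ m`, such that the factor of `x` of length `m` starting at position `j`
is a codeword. -/
def FactorDecodableWord {Q D : Type} (m : ℕ) (c : Q → List D) (x : List D) : Prop :=
  ∃! j : ℕ, 1 ≤ j ∧ j ≤ m ∧ ∃ q : Q, (x.drop (j - 1)).take m = c q

/-- The code `c` is factor-decodable: every factor of length `2m-1` of every
concatenation of codewords is factor-decodable. -/
def IsFactorDecodableCode {Q D : Type} (m : ℕ) (c : Q → List D) : Prop :=
  IsCode m c ∧
  ∀ l : List Q, l ≠ [] → ∀ x : List D, x.length = 2 * m - 1 →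
    x <:+: (l.map c).flatten → FactorDecodableWord m c x

/-- Encoding of a path `η` of length `≤ m`: the unique word `z ∈ (A × D)^{|η|}`
whose `A`-projection is the label of `η` and whose `D`-projection is the prefix
of length `|η|` of the codeword of the origin of `η` (the empty path encodes to
the empty word). -/
def encShort {Q A D : Type} (c : Q → List D) : List (Q × A × Q) → List (A × D)
  | [] => []
  | e :: t => (pathLabel (e :: t)).zip (c e.1)

/-- Encoding `[η]` of an arbitrary path `η`, obtained by encoding blockwise the
canonical decomposition of `η` into consecutive `m`-paths followed by one final
path of length `< m`. -/
def encPath {Q A D : Type} (c : Q → List D) (m : ℕ) (η : List (Q × A × Q)) :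
    List (A × D) :=
  if h : η.length ≤ m ∨ m = 0 then encShort c η
  else encShort c (η.take m) ++ encPath c m (η.drop m)
termination_by η.length
decreasing_by
  push_neg at h
  simp only [List.length_drop]
  omega

/-- The set `F_{2m}` of the path-encoding construction: all factors of length
`2m` of the encodings `[η'η''η''']` of three consecutive `m`-paths. -/
def Fset {Q A D : Type} (E : Set (Q × A × Q)) (c : Q → List D) (m : ℕ) :
    Set (List (A × D)) :=
  {w | ∃ η₁ η₂ η₃ : List (Q × A × Q),
    IsPath E (η₁ ++ η₂ ++ η₃) ∧ η₁.length = m ∧ η₂.length = m ∧ η₃.length = m ∧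
    w.length = 2 * m ∧ w <:+: encPath c m (η₁ ++ η₂ ++ η₃)}

/-- The set `I_{2m-1}` of the path-encoding construction: prefixes of length
`2m-1` of the encodings `[η'η'']` of two consecutive `m`-paths with
`δ([η']) = [q₀]`. -/
def Iset {Q A D : Type} (E : Set (Q × A × Q)) (q0 : Q) (c : Q → List D) (m : ℕ) :
    Set (List (A × D)) :=
  {w | ∃ η₁ η₂ : List (Q × A × Q),
    IsPath E (η₁ ++ η₂) ∧ η₁.length = m ∧ η₂.length = m ∧
    (encPath c m η₁).map Prod.snd = c q0 ∧
    w = (encPath c m (η₁ ++ η₂)).take (2 * m - 1)}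

/-- The set `T_{2m-1}` of the path-encoding construction: suffixes of length
`2m-1` of the encodings `[η'η''η''']` of consecutive paths with `|η'| = |η''| = m`,
`0 ≤ |η'''| < m` and `e(η''η''') ∈ F`. -/
def Tset {Q A D : Type} (E : Set (Q × A × Q)) (F : Set Q) (c : Q → List D) (m : ℕ) :
    Set (List (A × D)) :=
  {w | ∃ η₁ η₂ η₃ : List (Q × A × Q),
    IsPath E (η₁ ++ η₂ ++ η₃) ∧ η₁.length = m ∧ η₂.length = m ∧ η₃.length < m ∧
    (∃ q ∈ F, endState (η₂ ++ η₃) = some q) ∧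
    w = (encPath c m (η₁ ++ η₂ ++ η₃)).drop
      ((encPath c m (η₁ ++ η₂ ++ η₃)).length - (2 * m - 1))}

/-!
Factor-decodability forces every codeword in the `D`-track of a window of `F_{2m}` that starts
less than `m` letters into the window to sit at a block boundary of the three encoded `m`-paths
(two codewords less than `m` apart inside a window of length `2m - 1` would give two decoding
positions). So once the `D`-track of a window shows a codeword `[q]` at offset `p < m`, the window
is, from `p` on, the encoding of a path starting at `q`. The prefix in `I_{2m-1}` shows `[q₀]` at
offset `0`; decoding the first window yields the first block of the path and the codeword of the
next state, and one recurses on `z` with its first block removed. When fewer than `3m` letters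
remain, the last window of `z` decodes everything after the first block.
-/

section Paths

variable {Q A : Type} {E : Set (Q × A × Q)}

lemma IsPath.infix {η η' : List (Q × A × Q)} (hη : IsPath E η) (h : η' <:+: η)
    (hne : η' ≠ []) : IsPath E η' :=
  ⟨hne, fun e he => hη.2.1 e (h.subset he), hη.2.2.infix h⟩

lemma exists_origState_eq_some {η : List (Q × A × Q)} (h : η ≠ []) :
    ∃ q, origState η = some q := by
  cases η with
  | nil => exact absurd rfl h
  | cons e _ => exact ⟨e.1, rfl⟩

lemma origState_append_of_ne_nil {η η' : List (Q × A × Q)} (h : η ≠ []) :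
    origState (η ++ η') = origState η := by
  cases η with
  | nil => exact absurd rfl h
  | cons _ _ => rfl

lemma origState_take {η : List (Q × A × Q)} {n : ℕ} (hn : 0 < n) :
    origState (η.take n) = origState η := by
  cases η with
  | nil => simp
  | cons e _ => cases n with
    | zero => omega
    | succ _ => rfl

lemma IsPath.take_append {η η' : List (Q × A × Q)} {n : ℕ} (hη : IsPath E η)
    (hη' : IsPath E η') (hn : 0 < n) (hnη : n < η.length)
    (ho : origState η' = origState (η.drop n)) : IsPath E (η.take n ++ η') := by
  have hne : η.take n ≠ [] :=
    List.ne_nil_of_length_pos (by simp only [List.length_take]; omega)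
  have hne' : η.drop n ≠ [] :=
    List.ne_nil_of_length_pos (by simp only [List.length_drop]; omega)
  have hchain := List.isChain_append.mp ((List.take_append_drop n η).symm ▸ hη.2.2)
  refine ⟨by simp [hne], fun e he => ?_, List.isChain_append.mpr ⟨hchain.1, hη'.2.2, ?_⟩⟩
  · rcases List.mem_append.mp he with he | he
    · exact hη.2.1 e (List.mem_of_mem_take he)
    · exact hη'.2.1 e he
  · intro x hx y hy
    obtain ⟨y', hy'⟩ := Option.ne_none_iff_exists'.mp (mt List.head?_eq_none_iff.mp hne')
    rw [hchain.2.2 x hx y' hy']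
    simpa [origState, Option.mem_def.mp hy, hy'] using ho.symm

end Paths

section Encoding

lemma List.zip_take_left {α β : Type} :
    ∀ (l₁ : List α) (l₂ : List β) (n : ℕ), (l₁.take n).zip l₂ = (l₁.zip l₂).take n
  | [], _, _ | _ :: _, [], _ | _ :: _, _ :: _, 0 => by simp
  | a :: l₁, b :: l₂, n + 1 => by simp [List.zip_take_left l₁ l₂ n]

variable {Q A D : Type} {c : Q → List D} {m : ℕ}

lemma length_encShort (hc : ∀ q, (c q).length = m) {η : List (Q × A × Q)}
    (h : η.length ≤ m) : (encShort c η).length = η.length := by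
  cases η with
  | nil => rfl
  | cons e t =>
    simp only [encShort, List.length_zip, pathLabel, List.length_map, hc]
    exact min_eq_left h

lemma encShort_take (η : List (Q × A × Q)) (n : ℕ) :
    encShort c (η.take n) = (encShort c η).take n := by
  rcases η with _ | ⟨e, t⟩
  · simp [encShort]
  · rcases n with _ | n
    · simp [encShort]
    · rw [List.take_succ_cons, encShort, encShort, pathLabel, pathLabel, ← List.zip_take_left,
        ← List.take_succ_cons, List.map_take]

lemma map_snd_encShort (hc : ∀ q, (c q).length = m) {η : List (Q × A × Q)} {q : Q}
    (hη : η.length = m) (ho : origState η = some q) : (encShort c η).map Prod.snd = c q := by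
  cases η with
  | nil => simp [origState] at ho
  | cons e t =>
    obtain rfl : e.1 = q := by simpa [origState] using ho
    rw [encShort, List.map_snd_zip]
    simp [pathLabel, hc, ← hη]

lemma encPath_of_length_le {η : List (Q × A × Q)} (h : η.length ≤ m) :
    encPath c m η = encShort c η := by
  rw [encPath, dif_pos (Or.inl h)]

lemma encPath_eq_encShort_append (hm : 0 < m) (η : List (Q × A × Q)) :
    encPath c m η = encShort c (η.take m) ++ encPath c m (η.drop m) := by
  rcases le_or_gt η.length m with h | h
  · rw [encPath_of_length_le h, List.take_of_length_le h, List.drop_of_length_le h,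
      encPath_of_length_le (by simp), encShort, List.append_nil]
  · rw [encPath, dif_neg (by omega)]

lemma length_encPath (hc : ∀ q, (c q).length = m) (hm : 0 < m) (η : List (Q × A × Q)) :
    (encPath c m η).length = η.length := by
  rcases le_or_gt η.length m with h | h
  · rw [encPath_of_length_le h, length_encShort hc h]
  · rw [encPath_eq_encShort_append hm, List.length_append,
      length_encShort hc (by simp), length_encPath hc hm (η.drop m)]
    simp only [List.length_take, List.length_drop]
    omega
termination_by η.length

lemma encPath_append (hm : 0 < m) {σ : List (Q × A × Q)} (hσ : σ.length = m)
    (ρ : List (Q × A × Q)) : encPath c m (σ ++ ρ) = encPath c m σ ++ encPath c m ρ := by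
  rw [encPath_eq_encShort_append hm, List.take_left' hσ, List.drop_left' hσ,
    encPath_of_length_le hσ.le]

lemma encPath_drop (hc : ∀ q, (c q).length = m) (hm : 0 < m) (η : List (Q × A × Q)) :
    encPath c m (η.drop m) = (encPath c m η).drop m := by
  rcases le_or_gt η.length m with h | h
  · rw [List.drop_of_length_le h, List.drop_of_length_le (by rw [length_encPath hc hm]; exact h),
      encPath_of_length_le (by simp), encShort]
  · rw [encPath_eq_encShort_append hm η, List.drop_left']
    rw [length_encShort hc (by simp), List.length_take]
    omega

lemma encPath_take (hc : ∀ q, (c q).length = m) (hm : 0 < m) (η : List (Q × A × Q))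
    (n : ℕ) : encPath c m (η.take n) = (encPath c m η).take n := by
  rcases le_or_gt η.length m with h | h
  · rw [encPath_of_length_le h, encPath_of_length_le (by simp only [List.length_take]; omega),
      encShort_take]
  have hlen : (encShort c (η.take m)).length = m := by
    rw [length_encShort hc (by simp), List.length_take]
    omega
  rw [encPath_eq_encShort_append hm η, List.take_append, hlen]
  rcases le_or_gt n m with hn | hn
  · rw [encPath_of_length_le (by simp only [List.length_take]; omega), ← encShort_take,
      List.take_take, min_eq_left hn, Nat.sub_eq_zero_of_le hn, List.take_zero, List.append_nil]
  · rw [encPath_eq_encShort_append hm, ← encShort_take, List.take_take, List.take_take,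
      List.drop_take, encPath_take hc hm (η.drop m), min_comm]
termination_by η.length

lemma map_snd_take_encPath (hc : ∀ q, (c q).length = m) (hm : 0 < m)
    {η : List (Q × A × Q)} {q : Q} (hη : m ≤ η.length) (ho : origState η = some q) :
    ((encPath c m η).take m).map Prod.snd = c q := by
  rw [← encPath_take hc hm, encPath_of_length_le (by simp)]
  exact map_snd_encShort hc (by simpa using hη) (by rwa [origState_take hm])

end Encoding

section Code

variable {Q D : Type} {c : Q → List D} {m : ℕ}

lemma FactorDecodableWord.eq_of_codeword {x : List D} (hx : FactorDecodableWord m c x)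
    {a b : ℕ} (ha : a < m) (hb : b < m) {q r : Q} (hqa : (x.drop a).take m = c q)
    (hrb : (x.drop b).take m = c r) : a = b := by
  have := hx.unique (y₁ := a + 1) (y₂ := b + 1) ⟨by omega, ha, q, by simpa using hqa⟩
    ⟨by omega, hb, r, by simpa using hrb⟩
  omega

lemma IsFactorDecodableCode.eq_of_codeword (hc : IsFactorDecodableCode m c) {l : List Q}
    {s k : ℕ} (hs : s + (2 * m - 1) ≤ (l.map c).flatten.length) (hsk : s ≤ k) (hk : k < s + m)
    {q r : Q} (hr : ((l.map c).flatten.drop s).take m = c r)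
    (hq : ((l.map c).flatten.drop k).take m = c q) : k = s := by
  set u := (l.map c).flatten
  set x := (u.drop s).take (2 * m - 1)
  have hwindow : ∀ a, a + m ≤ 2 * m - 1 → (x.drop a).take m = (u.drop (s + a)).take m := by
    intro a ha
    rw [List.drop_take, List.take_take, List.drop_drop, min_eq_left (by omega)]
  have hl : l ≠ [] := by rintro rfl; simp [u] at hs; omega
  have hx : FactorDecodableWord m c x :=
    hc.2 l hl x (by simp [x]; omega)
      ((List.take_prefix _ _).isInfix.trans (List.drop_suffix _ _).isInfix)
  have := hx.eq_of_codeword (a := k - s) (b := 0) (by omega) (by omega)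
    (by rw [hwindow _ (by omega), Nat.add_sub_cancel' hsk]; exact hq)
    (by rw [hwindow _ (by omega)]; exact hr)
  omega

lemma IsFactorDecodableCode.offset_eq_zero_or_eq (hc : IsFactorDecodableCode m c)
    {r₁ r₂ r₃ q : Q} {k : ℕ} (hk : k < 2 * m)
    (h : ((c r₁ ++ c r₂ ++ c r₃).drop k).take m = c q) : k = 0 ∨ k = m := by
  have hlen := hc.1.2
  have hu : c r₁ ++ c r₂ ++ c r₃ = ([r₁, r₂, r₃].map c).flatten := by simp
  rw [hu] at h
  rcases lt_or_ge k m with hkm | hkm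
  · refine .inl (hc.eq_of_codeword (s := 0) (r := r₁) (by simp [hlen]; omega) (by omega)
      (by omega) ?_ h)
    simp [List.take_left' (hlen r₁)]
  · refine .inr (hc.eq_of_codeword (s := m) (r := r₂) (by simp [hlen]; omega) hkm
      (by omega) ?_ h)
    simp [List.drop_left' (hlen r₁), List.take_left' (hlen r₂)]

end Code

section Decoding

variable {Q A D : Type} {E : Set (Q × A × Q)} {c : Q → List D} {m : ℕ}

lemma map_snd_encPath_of_length_eq (hc : ∀ q, (c q).length = m) {σ : List (Q × A × Q)}
    {q : Q} (hσ : σ.length = m) (ho : origState σ = some q) :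
    (encPath c m σ).map Prod.snd = c q := by
  rw [encPath_of_length_le hσ.le, map_snd_encShort hc hσ ho]

lemma exists_path_of_mem_Fset (hc : IsFactorDecodableCode m c) {w : List (A × D)}
    (hw : w ∈ Fset E c m) {p : ℕ} (hp : p < m) {q : Q}
    (hq : ((w.drop p).take m).map Prod.snd = c q) :
    ∃ η, IsPath E η ∧ origState η = some q ∧ w.drop p = encPath c m η := by
  obtain ⟨hinj, hlen⟩ := hc.1
  have hm : 0 < m := by omega
  obtain ⟨ζ₁, ζ₂, ζ₃, hζ, h₁, h₂, h₃, hwlen, s, t, hst⟩ := hw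
  set ζ := ζ₁ ++ ζ₂ ++ ζ₃
  obtain ⟨r₁, hr₁⟩ := exists_origState_eq_some (List.ne_nil_of_length_pos (h₁ ▸ hm))
  obtain ⟨r₂, hr₂⟩ := exists_origState_eq_some (List.ne_nil_of_length_pos (h₂ ▸ hm))
  obtain ⟨r₃, hr₃⟩ := exists_origState_eq_some (List.ne_nil_of_length_pos (h₃ ▸ hm))
  have hcodes : (encPath c m ζ).map Prod.snd = c r₁ ++ c r₂ ++ c r₃ := by
    rw [show ζ = ζ₁ ++ (ζ₂ ++ ζ₃) from List.append_assoc .., encPath_append hm h₁,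
      encPath_append hm h₂]
    simp only [List.map_append, map_snd_encPath_of_length_eq hlen h₁ hr₁,
      map_snd_encPath_of_length_eq hlen h₂ hr₂, map_snd_encPath_of_length_eq hlen h₃ hr₃,
      List.append_assoc]
  have hζlen : (encPath c m ζ).length = 3 * m := by
    rw [length_encPath hlen hm]
    simp only [ζ, List.length_append, h₁, h₂, h₃]
    omega
  set k := s.length + p
  have hs : s.length ≤ m := by
    have := congrArg List.length hst; simp only [List.length_append] at this; omega
  have hwp : w.drop p = ((encPath c m ζ).drop k).take (2 * m - p) := by
    rw [← hst, List.append_assoc, ← List.drop_drop, List.drop_left,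
      List.drop_append_of_le_length (by omega), List.take_left' (by simp [hwlen])]
  have hk : k = 0 ∨ k = m := by
    have hcode : ((c r₁ ++ c r₂ ++ c r₃).drop k).take m = c q := by
      rw [← hcodes, ← List.map_drop, ← List.map_take, ← hq, hwp, List.take_take,
        min_eq_left (by omega)]
    exact hc.offset_eq_zero_or_eq (by omega) hcode
  have hdrop : (encPath c m ζ).drop k = encPath c m (ζ.drop k) := by
    rcases hk with hk | hk <;> rw [hk]
    · simp
    · exact (encPath_drop hlen hm ζ).symm
  set η := (ζ.drop k).take (2 * m - p)
  have hηlen : η.length = 2 * m - p := by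
    simp only [η, ζ, List.length_take, List.length_drop, List.length_append, h₁, h₂, h₃]
    omega
  have henc : w.drop p = encPath c m η := by
    rw [hwp, hdrop, encPath_take hlen hm]
  have hη : IsPath E η := hζ.infix ((List.take_prefix _ _).isInfix.trans
    (List.drop_suffix _ _).isInfix) (List.ne_nil_of_length_pos (by omega))
  obtain ⟨r, hr⟩ := exists_origState_eq_some hη.1
  have hrq : c r = c q := by rw [← map_snd_take_encPath hlen hm (by omega) hr, ← henc, hq]
  exact ⟨η, hη, hinj hrq ▸ hr, henc⟩

theorem exists_path_of_forall_infix_mem_Fset (hm : 0 < m) (hc : IsFactorDecodableCode m c)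
    (z : List (A × D)) (hz : 2 * m ≤ z.length)
    (hF : ∀ y : List (A × D), y.length = 2 * m → y <:+: z → y ∈ Fset E c m)
    {q : Q} (hq : (z.take m).map Prod.snd = c q) :
    ∃ η, IsPath E η ∧ origState η = some q ∧ z = encPath c m η := by
  have hlen := hc.1.2
  obtain ⟨ζ, hζ, hζq, hzζ⟩ := exists_path_of_mem_Fset hc
    (hF (z.take (2 * m)) (by simp only [List.length_take]; omega)
      (List.take_prefix _ _).isInfix) hm
    (by rwa [List.drop_zero, List.take_take, min_eq_left (by omega)])
  rw [List.drop_zero] at hzζ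
  have hζlen : ζ.length = 2 * m := by
    rw [← length_encPath hlen hm, ← hzζ, List.length_take]
    omega
  obtain ⟨q', hq'⟩ := exists_origState_eq_some (List.ne_nil_of_length_pos
    (by simp only [List.length_drop]; omega : 0 < (ζ.drop m).length))
  have hzm : (z.take (2 * m)).drop m = encPath c m (ζ.drop m) := by
    rw [hzζ, encPath_drop hlen hm]
  obtain ⟨η', hη', hη'q', hzη'⟩ :
      ∃ η', IsPath E η' ∧ origState η' = some q' ∧ z.drop m = encPath c m η' := by
    have hq'm : ((z.drop m).take m).map Prod.snd = c q' := by
      rw [← map_snd_take_encPath hlen hm (by simp only [List.length_drop]; omega) hq', ← hzm,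
        List.drop_take, List.take_take, min_eq_left (by omega)]
    rcases hz.eq_or_lt with heq | hgt
    · refine ⟨ζ.drop m, hζ.infix (List.drop_suffix _ _).isInfix (List.ne_nil_of_length_pos
        (by simp only [List.length_drop]; omega)), hq', ?_⟩
      rw [← hzm, List.take_of_length_le heq.ge]
    · rcases le_or_gt (3 * m) z.length with h3 | h3
      · exact exists_path_of_forall_infix_mem_Fset hm hc (z.drop m)
          (by simp only [List.length_drop]; omega)
          (fun y hy hyz => hF y hy (hyz.trans (List.drop_suffix _ _).isInfix)) hq'm
      · -- the last window of `z` starts `j = |z| - 2m < m` letters before the block at `m`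
        set j := z.length - 2 * m
        have hjm : (z.drop j).drop (m - j) = z.drop m := by
          rw [List.drop_drop]; congr 1; omega
        obtain ⟨η', hη', hη'q', hzη'⟩ := exists_path_of_mem_Fset hc
          (hF (z.drop j) (by simp only [List.length_drop]; omega) (List.drop_suffix _ _).isInfix)
          (p := m - j) (by omega) (by rwa [hjm])
        exact ⟨η', hη', hη'q', hjm ▸ hzη'⟩
  refine ⟨ζ.take m ++ η', hζ.take_append hη' hm (by omega) (by rw [hη'q', hq']), ?_, ?_⟩
  · rw [origState_append_of_ne_nil
      (List.ne_nil_of_length_pos (by simp only [List.length_take]; omega)), origState_take hm, hζq]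
  · rw [encPath_append hm (by simp only [List.length_take]; omega), encPath_take hlen hm, ← hzζ,
      ← hzη', List.take_take, min_eq_left (by omega), List.take_append_drop]
termination_by z.length
decreasing_by simp only [List.length_drop]; omega

end Decoding

theorem decode_path_from_prefix_general {Q A D : Type}
    (E : Set (Q × A × Q)) (q0 : Q)
    (m : ℕ) (hm : 2 ≤ m) (c : Q → List D) (hc : IsFactorDecodableCode m c) :
    ∀ z : List (A × D), 2 * m ≤ z.length →
      (∀ y : List (A × D), y.length = 2 * m → y <:+: z → y ∈ Fset E c m) →
      z.take (2 * m - 1) ∈ Iset E q0 c m →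
      ∃ η : List (Q × A × Q), IsPath E η ∧ origState η = some q0 ∧
        z = encPath c m η := by
  intro z hz hF ⟨η₁, η₂, _, h₁, _, hq0, hprefix⟩
  have hm' : 0 < m := by omega
  have hprefix_m : z.take m = encPath c m η₁ :=
    calc z.take m
        = (z.take (2 * m - 1)).take m := by rw [List.take_take, min_eq_left (by omega)]
      _ = (encPath c m (η₁ ++ η₂)).take m := by
        rw [hprefix, List.take_take, min_eq_left (by omega)]
      _ = encPath c m η₁ := by rw [← encPath_take hc.1.2 hm', List.take_left' h₁]
  exact exists_path_of_forall_infix_mem_Fset hm' hc z hz hF (hprefix_m ▸ hq0)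

/-- **claim (+).** If all factors of length `2m` of a word
`z ∈ (A×D)⁺` with `|z| ≥ 2m` belong to `F_{2m}` and the prefix of `z` of length
`2m-1` belongs to `I_{2m-1}`, then `z = [η]` for some path `η` of `M` with
origin `q₀`. -/
theorem decode_path_from_prefix {Q A D : Type} [Fintype Q]
    (E : Set (Q × A × Q)) (q0 : Q) (F : Set Q) (hq0 : q0 ∉ F)
    (hTot : TotalRel E) (hn : 1 < Fintype.card Q)
    (m : ℕ) (hm : 2 ≤ m) (c : Q → List D) (hc : IsFactorDecodableCode m c) :
    ∀ z : List (A × D), 2 * m ≤ z.length →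
      (∀ y : List (A × D), y.length = 2 * m → y <:+: z → y ∈ Fset E c m) →
      z.take (2 * m - 1) ∈ Iset E q0 c m →
      ∃ η : List (Q × A × Q), IsPath E η ∧ origState η = some q0 ∧
        z = encPath c m η :=
  decode_path_from_prefix_general E q0 m hm c hc
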